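/- Let n ≥ 1, 0 < θ < n, σ ∈ (θ/n, 1), x₀ ∈ ℝⁿ, r > 0, and let f : ℝⁿ → ℝ be measurable with Morrey bound ∫_{B_ρ(y)} |f|^p dx ≤ K ρ^θ for all y ∈ ℝⁿ, ρ > 0, for some constant K and 1 ≤ p < ∞. Then ∫_{ℝⁿ} |f|^p (M χ_{B_r(x₀)})^σ dx ≤ c(n, θ, σ) K r^θ, where M is the Hardy–Littlewood maximal operator. -/

import Mathlib

/-!
`M χ_{B_r(x₀)} ≤ 1` everywhere, and at distance `d ≥ 2r` from `x₀` it is at most `(2r/d)ⁿ`,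
because a ball `B_ρ(x)` meeting `B_r(x₀)` has `ρ > d - r ≥ d/2`. On the `k`-th dyadic shell of the
balls `B_k = B_{2ᵏ·2r}(x₀)` this gives `M^σ ≤ (2/2ᵏ)^{nσ}`, while the Morrey bound controls
`∫_{B_k} |f|^p` by `K (2ᵏ·2r)^θ`; the resulting series is geometric with ratio `2^θ / 2^{nσ} < 1`.
Since `M` is lower semicontinuous and bounded below on bounded sets, a finite weighted integral
forces `|f|^p` to be integrable on balls, so that the Morrey bound speaks about genuine integrals.
-/

open MeasureTheory Metric Set Filter
open scoped ENNReal

section Measure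

variable {X : Type*} [MeasurableSpace X] (μ : Measure X)

theorem setAverage_indicator_one {s : Set X} (t : Set X) (hs : MeasurableSet s) :
    ⨍ y in t, s.indicator (fun _ => (1 : ℝ)) y ∂μ = μ.real (t ∩ s) / μ.real t := by
  rw [setAverage_eq, setIntegral_indicator hs, setIntegral_const]
  simp only [smul_eq_mul, mul_one, inv_mul_eq_div]

theorem measureReal_inter_div_le_one (t s : Set X) : μ.real (t ∩ s) / μ.real t ≤ 1 := by
  rcases eq_or_ne (μ t) ∞ with h | h
  · simp [measureReal_def, h]
  · exact div_le_one_of_le₀ (measureReal_mono inter_subset_left h) measureReal_nonneg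

end Measure

section Integration

variable {X : Type*} [MeasurableSpace X] {μ : Measure X}

theorem integrableOn_of_integrable_mul_of_le {F W : X → ℝ} {s : Set X} {m : ℝ}
    (hFW : Integrable (fun x => F x * W x) μ) (hW : Measurable W) (hs : MeasurableSet s)
    (hm : 0 < m) (hWs : ∀ x ∈ s, m ≤ W x) : IntegrableOn F s μ := by
  have hmeas : AEStronglyMeasurable F (μ.restrict s) := by
    refine ((hFW.aemeasurable.div hW.aemeasurable).aestronglyMeasurable.restrict).congr ?_
    refine (ae_restrict_iff' hs).2 (Eventually.of_forall fun x hx => ?_)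
    exact mul_div_cancel_right₀ _ (hm.trans_le (hWs x hx)).ne'
  refine (hFW.norm.div_const m).integrableOn.mono' hmeas ((ae_restrict_iff' hs).2
    (Eventually.of_forall fun x hx => ?_))
  have hW0 : 0 ≤ W x := hm.le.trans (hWs x hx)
  rw [le_div_iff₀ hm, norm_mul, Real.norm_of_nonneg hW0]
  exact mul_le_mul_of_nonneg_left (hWs x hx) (norm_nonneg _)

theorem integral_mul_le_tsum_of_disjointed {F W : X → ℝ} {B : ℕ → Set X} {w A : ℕ → ℝ}
    (hB : ∀ k, MeasurableSet (B k)) (hcover : ⋃ k, B k = univ)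
    (hFW : Integrable (fun x => F x * W x) μ) (hF : ∀ k, IntegrableOn F (B k) μ)
    (hF0 : ∀ x, 0 ≤ F x) (hw0 : ∀ k, 0 ≤ w k) (hW : ∀ k, ∀ x ∈ disjointed B k, W x ≤ w k)
    (hA : ∀ k, ∫ x in B k, F x ∂μ ≤ A k) (hsum : Summable fun k => w k * A k) :
    ∫ x, F x * W x ∂μ ≤ ∑' k, w k * A k := by
  have hS : ∀ k, MeasurableSet (disjointed B k) := MeasurableSet.disjointed hB
  have hpieces : HasSum (fun k => ∫ x in disjointed B k, F x * W x ∂μ) (∫ x, F x * W x ∂μ) := by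
    have := hasSum_integral_iUnion hS (disjoint_disjointed B) hFW.integrableOn
    rwa [iUnion_disjointed, hcover, Measure.restrict_univ] at this
  rw [← hpieces.tsum_eq]
  refine hpieces.summable.tsum_le_tsum (fun k => ?_) hsum
  have hFk : IntegrableOn F (disjointed B k) μ := (hF k).mono_set (disjointed_subset B k)
  calc ∫ x in disjointed B k, F x * W x ∂μ
      ≤ ∫ x in disjointed B k, w k * F x ∂μ :=
        setIntegral_mono_on hFW.integrableOn (hFk.const_mul _) (hS k) fun x hx => by
          rw [mul_comm (w k)]
          exact mul_le_mul_of_nonneg_left (hW k x hx) (hF0 x)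
    _ = w k * ∫ x in disjointed B k, F x ∂μ := integral_const_mul _ _
    _ ≤ w k * ∫ x in B k, F x ∂μ := mul_le_mul_of_nonneg_left
        (setIntegral_mono_set (hF k) (Eventually.of_forall fun x => hF0 x)
          (disjointed_subset B k).eventuallyLE) (hw0 k)
    _ ≤ w k * A k := mul_le_mul_of_nonneg_left (hA k) (hw0 k)

end Integration

section Metric

variable {X : Type*} [PseudoMetricSpace X]

theorem iUnion_ball_two_pow_mul (x₀ : X) {r : ℝ} (hr : 0 < r) :
    ⋃ k : ℕ, ball x₀ (2 ^ k * r) = univ := by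
  refine eq_univ_of_forall fun x => mem_iUnion.2 ?_
  obtain ⟨k, hk⟩ := pow_unbounded_of_one_lt (dist x x₀ / r) one_lt_two
  exact ⟨k, mem_ball.2 (by rwa [div_lt_iff₀ hr] at hk)⟩

variable [MeasurableSpace X]

theorem lowerSemicontinuous_measureReal_ball_inter (μ : Measure X) {s : Set X} (hs : μ s ≠ ∞)
    (ρ : ℝ) :
    LowerSemicontinuous fun x => μ.real (ball x ρ ∩ s) := by
  intro x c hc
  have hunion : ⋃ k : ℕ, ball x (ρ - 1 / (k + 1)) ∩ s = ball x ρ ∩ s := by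
    rw [← iUnion_inter]
    congr 1
    ext y
    simp only [mem_iUnion, mem_ball]
    refine ⟨fun ⟨k, hk⟩ => hk.trans_le (sub_le_self _ (by positivity)), fun hy => ?_⟩
    obtain ⟨k, hk⟩ := exists_nat_one_div_lt (sub_pos.mpr hy)
    exact ⟨k, by linarith⟩
  have hmono : Monotone fun k : ℕ => ball x (ρ - 1 / (k + 1)) ∩ s := fun i j hij =>
    inter_subset_inter_left _ (ball_subset_ball (sub_le_sub_left
      (one_div_le_one_div_of_le (by positivity) (by exact_mod_cast Nat.succ_le_succ hij)) ρ))
  have hfin : μ (ball x ρ ∩ s) ≠ ∞ := measure_ne_top_of_subset inter_subset_right hs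
  have hlim := tendsto_measure_iUnion_atTop (μ := μ) hmono
  rw [hunion] at hlim
  replace hlim := (ENNReal.tendsto_toReal hfin).comp hlim
  obtain ⟨k, hk⟩ := (hlim.eventually (lt_mem_nhds hc)).exists
  filter_upwards [ball_mem_nhds x (show (0 : ℝ) < 1 / (k + 1) by positivity)] with x' hx'
  refine hk.trans_le (measureReal_mono (inter_subset_inter_left _ (ball_subset_ball' ?_))
    (measure_ne_top_of_subset inter_subset_right hs))
  rw [mem_ball] at hx'
  rw [dist_comm]
  linarith

end Metric

theorem two_rpow_div_two_rpow_lt_one {a b : ℝ} (h : a < b) : (2 : ℝ) ^ a / 2 ^ b < 1 :=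
  (div_lt_one (by positivity)).2 (Real.rpow_lt_rpow_of_exponent_lt one_lt_two h)

theorem two_div_two_pow_pow_rpow_mul_rpow (d k : ℕ) (σ θ : ℝ) {R : ℝ} (hR : 0 ≤ R) :
    ((2 / 2 ^ k) ^ d) ^ σ * (2 ^ k * R) ^ θ
      = 2 ^ (d * σ) * R ^ θ * (2 ^ θ / 2 ^ (d * σ)) ^ k := by
  have h2 : (0 : ℝ) ≤ 2 := zero_le_two
  rw [← Real.rpow_natCast_mul (by positivity), Real.div_rpow h2 (by positivity),
    Real.mul_rpow (by positivity) hR, ← Real.rpow_pow_comm h2, ← Real.rpow_pow_comm h2, div_pow]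
  field_simp

section MaximalIndicator

variable {X : Type*} [PseudoMetricSpace X] [MeasurableSpace X] (μ : Measure X)

/-- `M χ_s`, the centred Hardy–Littlewood maximal function of the indicator of `s`. -/
noncomputable def maximalIndicator (s : Set X) (x : X) : ℝ :=
  ⨆ ρ : {ρ : ℝ // 0 < ρ}, ⨍ y in ball x ρ, s.indicator (fun _ => (1 : ℝ)) y ∂μ

variable {μ} {s : Set X} {x : X} {ρ : ℝ}

theorem maximalIndicator_eq (hs : MeasurableSet s) (x : X) :
    maximalIndicator μ s x = ⨆ ρ : {ρ : ℝ // 0 < ρ}, μ.real (ball x ρ ∩ s) / μ.real (ball x ρ) := by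
  simp only [maximalIndicator, setAverage_indicator_one μ _ hs]

theorem div_le_maximalIndicator (hs : MeasurableSet s) (hρ : 0 < ρ) :
    μ.real (ball x ρ ∩ s) / μ.real (ball x ρ) ≤ maximalIndicator μ s x := by
  rw [maximalIndicator_eq hs]
  exact le_ciSup (f := fun ρ : {ρ : ℝ // 0 < ρ} => μ.real (ball x ρ ∩ s) / μ.real (ball x ρ))
    ⟨1, forall_mem_range.2 fun _ => measureReal_inter_div_le_one μ _ _⟩ ⟨ρ, hρ⟩

theorem maximalIndicator_le {b : ℝ} (hs : MeasurableSet s)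
    (h : ∀ ρ, 0 < ρ → μ.real (ball x ρ ∩ s) / μ.real (ball x ρ) ≤ b) :
    maximalIndicator μ s x ≤ b := by
  have : Nonempty {ρ : ℝ // 0 < ρ} := ⟨⟨1, one_pos⟩⟩
  rw [maximalIndicator_eq hs]
  exact ciSup_le fun ρ => h ρ ρ.2

theorem maximalIndicator_nonneg (hs : MeasurableSet s) : 0 ≤ maximalIndicator μ s x :=
  (div_nonneg measureReal_nonneg measureReal_nonneg).trans (div_le_maximalIndicator hs one_pos)

theorem maximalIndicator_le_one (hs : MeasurableSet s) : maximalIndicator μ s x ≤ 1 :=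
  maximalIndicator_le hs fun _ _ => measureReal_inter_div_le_one μ _ _

end MaximalIndicator

section AddHaar

variable {E : Type*} [NormedAddCommGroup E] [MeasurableSpace E] [BorelSpace E]
  {μ : Measure E} [μ.IsAddHaarMeasure]

theorem lowerSemicontinuous_maximalIndicator {s : Set E} (hs : MeasurableSet s) (hμs : μ s ≠ ∞) :
    LowerSemicontinuous (maximalIndicator μ s) := by
  have hcenter : maximalIndicator μ s =
      fun x => ⨆ ρ : {ρ : ℝ // 0 < ρ}, μ.real (ball x ρ ∩ s) / μ.real (ball (0 : E) ρ) := by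
    funext x
    simp only [maximalIndicator_eq hs, Measure.addHaar_real_ball_center μ x]
  rw [hcenter]
  refine lowerSemicontinuous_ciSup (fun x => ⟨1, forall_mem_range.2 fun ρ => ?_⟩) fun ρ =>
    (continuous_id.div_const _).comp_lowerSemicontinuous
      (lowerSemicontinuous_measureReal_ball_inter μ hμs ρ)
      fun _ _ h => div_le_div_of_nonneg_right h measureReal_nonneg
  rw [← Measure.addHaar_real_ball_center μ x]
  exact measureReal_inter_div_le_one μ _ _

variable [NormedSpace ℝ E] [FiniteDimensional ℝ E] {x x₀ : E} {r ρ : ℝ}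

theorem measureReal_ball_div_measureReal_ball (μ : Measure E) [μ.IsAddHaarMeasure] (x y : E)
    (hr : 0 < r) (hρ : 0 < ρ) :
    μ.real (ball x r) / μ.real (ball y ρ) = (r / ρ) ^ Module.finrank ℝ E := by
  have hball : ∀ (z : E) {t : ℝ}, 0 < t →
      μ.real (ball z t) = t ^ Module.finrank ℝ E * μ.real (ball 0 1) := fun z t ht => by
    rw [measureReal_def, Measure.addHaar_ball_of_pos μ z ht, ENNReal.toReal_mul,
      ENNReal.toReal_ofReal (by positivity), measureReal_def]
  have hunit : μ.real (ball (0 : E) 1) ≠ 0 :=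
    (ENNReal.toReal_pos (measure_ball_pos μ _ one_pos).ne' measure_ball_lt_top.ne).ne'
  rw [hball x hr, hball y hρ, mul_div_mul_right _ _ hunit, div_pow]

theorem measureReal_ball_inter_ball_div_le (hr : 0 < r) (hρ : 0 < ρ) :
    μ.real (ball x ρ ∩ ball x₀ r) / μ.real (ball x ρ) ≤ (r / ρ) ^ Module.finrank ℝ E := by
  rw [← measureReal_ball_div_measureReal_ball μ x₀ x hr hρ]
  exact div_le_div_of_nonneg_right (measureReal_mono inter_subset_right) measureReal_nonneg

theorem maximalIndicator_ball_le_of_two_mul_le_dist (hr : 0 < r) (hx : 2 * r ≤ dist x x₀) :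
    maximalIndicator μ (ball x₀ r) x ≤ (2 * r / dist x x₀) ^ Module.finrank ℝ E := by
  refine maximalIndicator_le measurableSet_ball fun ρ hρ => ?_
  rcases le_or_gt (ρ + r) (dist x x₀) with hfar | hnear
  · rw [(ball_disjoint_ball hfar).inter_eq, measureReal_empty, zero_div]
    positivity
  · refine (measureReal_ball_inter_ball_div_le hr hρ).trans (pow_le_pow_left₀ (by positivity) ?_ _)
    rw [div_le_div_iff₀ hρ (by linarith)]
    nlinarith

theorem div_pow_le_maximalIndicator_ball {R : ℝ} (hr : 0 < r) (hx : dist x x₀ < R) :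
    (r / (R + r)) ^ Module.finrank ℝ E ≤ maximalIndicator μ (ball x₀ r) x := by
  have hR : 0 < R + r := by linarith [dist_nonneg (x := x) (y := x₀)]
  have hsub : ball x₀ r ⊆ ball x (R + r) := ball_subset_ball' (by rw [dist_comm]; linarith)
  calc (r / (R + r)) ^ Module.finrank ℝ E
      = μ.real (ball x (R + r) ∩ ball x₀ r) / μ.real (ball x (R + r)) := by
        rw [inter_eq_right.2 hsub, measureReal_ball_div_measureReal_ball μ x₀ x hr hR]
    _ ≤ maximalIndicator μ (ball x₀ r) x := div_le_maximalIndicator measurableSet_ball hR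

theorem maximalIndicator_ball_le_of_mem_disjointed (hr : 0 < r) {k : ℕ}
    (hx : x ∈ disjointed (fun k : ℕ => ball x₀ (2 ^ k * (2 * r))) k) :
    maximalIndicator μ (ball x₀ r) x ≤ (2 / 2 ^ k) ^ Module.finrank ℝ E := by
  cases k with
  | zero =>
    calc maximalIndicator μ (ball x₀ r) x ≤ 1 := maximalIndicator_le_one measurableSet_ball
      _ ≤ (2 / 2 ^ 0) ^ Module.finrank ℝ E := by norm_num [one_le_pow₀]
  | succ k =>
    rw [disjointed_add_one] at hx
    have hfar : 2 ^ k * (2 * r) ≤ dist x x₀ :=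
      not_lt.1 fun h => hx.2 (le_partialSups (fun k : ℕ => ball x₀ (2 ^ k * (2 * r))) k h)
    have h2r : 2 * r ≤ 2 ^ k * (2 * r) :=
      le_mul_of_one_le_left (by positivity) (one_le_pow₀ one_le_two)
    refine (maximalIndicator_ball_le_of_two_mul_le_dist hr (h2r.trans hfar)).trans
      (pow_le_pow_left₀ (by positivity) ?_ _)
    rw [div_le_div_iff₀ (by linarith) (by positivity), pow_succ]
    nlinarith

end AddHaar

section MorreyEstimate

variable {E : Type*} [NormedAddCommGroup E] [NormedSpace ℝ E] [FiniteDimensional ℝ E]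
  [MeasurableSpace E] [BorelSpace E] {μ : Measure E} [μ.IsAddHaarMeasure]
  {x₀ : E} {r σ : ℝ} {F : E → ℝ}

theorem integrableOn_ball_of_integrable_mul_maximalIndicator_rpow (hr : 0 < r) (hσ : 0 ≤ σ)
    (hFM : Integrable (fun x => F x * maximalIndicator μ (ball x₀ r) x ^ σ) μ)
    {R : ℝ} (hR : 0 < R) : IntegrableOn F (ball x₀ R) μ := by
  have hM : Measurable fun x => maximalIndicator μ (ball x₀ r) x ^ σ :=
    (lowerSemicontinuous_maximalIndicator measurableSet_ball
      measure_ball_lt_top.ne).measurable.pow_const σ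
  refine integrableOn_of_integrable_mul_of_le (m := ((r / (R + r)) ^ Module.finrank ℝ E) ^ σ)
    hFM hM measurableSet_ball (by positivity) fun x hx => ?_
  exact Real.rpow_le_rpow (by positivity) (div_pow_le_maximalIndicator_ball hr (mem_ball.1 hx)) hσ

theorem integral_mul_maximalIndicator_rpow_le {θ K : ℝ} (hσ : 0 ≤ σ)
    (hθσ : θ < Module.finrank ℝ E * σ) (hF0 : ∀ x, 0 ≤ F x)
    (hF : ∀ y ρ, 0 < ρ → ∫ x in ball y ρ, F x ∂μ ≤ K * ρ ^ θ) (hr : 0 < r) :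
    ∫ x, F x * maximalIndicator μ (ball x₀ r) x ^ σ ∂μ
      ≤ 2 ^ (Module.finrank ℝ E * σ) * 2 ^ θ / (1 - 2 ^ θ / 2 ^ (Module.finrank ℝ E * σ))
        * K * r ^ θ := by
  set d := Module.finrank ℝ E
  set q : ℝ := 2 ^ θ / 2 ^ (d * σ)
  have hq1 : q < 1 := two_rpow_div_two_rpow_lt_one hθσ
  have hq0 : 0 ≤ q := by positivity
  have hK : 0 ≤ K := by
    simpa using (integral_nonneg hF0).trans (hF x₀ 1 one_pos)
  by_cases hFM : Integrable (fun x => F x * maximalIndicator μ (ball x₀ r) x ^ σ) μ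
  swap
  · rw [integral_undef hFM]
    have := sub_pos.2 hq1
    positivity
  have hterm : ∀ k : ℕ, ((2 / 2 ^ k) ^ d) ^ σ * (K * (2 ^ k * (2 * r)) ^ θ)
      = K * 2 ^ (d * σ) * (2 * r) ^ θ * q ^ k := fun k => by
    rw [mul_left_comm, two_div_two_pow_pow_rpow_mul_rpow d k σ θ (by positivity)]
    ring
  calc ∫ x, F x * maximalIndicator μ (ball x₀ r) x ^ σ ∂μ
      ≤ ∑' k : ℕ, ((2 / 2 ^ k) ^ d) ^ σ * (K * (2 ^ k * (2 * r)) ^ θ) :=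
        integral_mul_le_tsum_of_disjointed (fun k => measurableSet_ball)
          (iUnion_ball_two_pow_mul x₀ (by positivity)) hFM
          (fun k => integrableOn_ball_of_integrable_mul_maximalIndicator_rpow hr hσ hFM
            (by positivity))
          hF0 (fun k => by positivity)
          (fun k x hx => Real.rpow_le_rpow (maximalIndicator_nonneg measurableSet_ball)
            (maximalIndicator_ball_le_of_mem_disjointed hr hx) hσ)
          (fun k => hF x₀ _ (by positivity))
          (by simpa only [hterm] using (summable_geometric_of_lt_one hq0 hq1).mul_left _)
    _ = 2 ^ (d * σ) * 2 ^ θ / (1 - q) * K * r ^ θ := by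
        rw [funext hterm, tsum_mul_left, tsum_geometric_of_lt_one hq0 hq1,
          Real.mul_rpow zero_le_two hr.le]
        ring

end MorreyEstimate

theorem integral_against_maximal_power_general (n : ℕ) (hn : 1 ≤ n) (θ σ : ℝ)
    (hθ : 0 < θ) (hσ : θ / n < σ) :
    ∃ c : ℝ, 0 < c ∧
      ∀ (p : ℝ), 1 ≤ p → ∀ (f : EuclideanSpace ℝ (Fin n) → ℝ) (K : ℝ),
        (∀ (y : EuclideanSpace ℝ (Fin n)) (ρ : ℝ), 0 < ρ →
          (∫ x in ball y ρ, |f x| ^ p) ≤ K * ρ ^ θ) →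
        ∀ (x₀ : EuclideanSpace ℝ (Fin n)) (r : ℝ), 0 < r →
          (∫ x, |f x| ^ p *
              (⨆ ρ : {ρ : ℝ // 0 < ρ},
                ⨍ y in ball x (ρ : ℝ), (ball x₀ r).indicator (fun _ => (1 : ℝ)) y) ^ σ) ≤
            c * K * r ^ θ := by
  have hσ0 : 0 ≤ σ := (div_nonneg hθ.le n.cast_nonneg).trans hσ.le
  have hθσ : θ < n * σ := by rwa [div_lt_iff₀' (by exact_mod_cast hn)] at hσ
  refine ⟨2 ^ (n * σ) * 2 ^ θ / (1 - 2 ^ θ / 2 ^ (n * σ)),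
    div_pos (by positivity) (sub_pos.2 (two_rpow_div_two_rpow_lt_one hθσ)),
    fun p _ f K hf x₀ r hr => ?_⟩
  have h := integral_mul_maximalIndicator_rpow_le (μ := volume) (x₀ := x₀) hσ0
    (by rwa [finrank_euclideanSpace_fin]) (fun x => by positivity) hf hr
  rw [finrank_euclideanSpace_fin] at h
  exact h

/-- If `f` satisfies the Morrey bound `∫_{B_ρ(y)} |f|^p ≤ K ρ^θ` for
all balls, `0 < θ < n`, `σ ∈ (θ/n, 1)`, then weighting by the `σ`-th power of the
maximal function of `χ_{B_r(x₀)}` gives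
`∫_{ℝⁿ} |f|^p (M χ_{B_r(x₀)})^σ ≤ c(n,θ,σ) K r^θ`. -/
theorem integral_against_maximal_power (n : ℕ) (hn : 1 ≤ n) (θ σ : ℝ)
    (hθ : 0 < θ) (hθn : θ < n) (hσ : θ / n < σ) (hσ1 : σ < 1) :
    ∃ c : ℝ, 0 < c ∧
      ∀ (p : ℝ), 1 ≤ p → ∀ (f : EuclideanSpace ℝ (Fin n) → ℝ) (K : ℝ),
        (∀ (y : EuclideanSpace ℝ (Fin n)) (ρ : ℝ), 0 < ρ →
          (∫ x in ball y ρ, |f x| ^ p) ≤ K * ρ ^ θ) →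
        ∀ (x₀ : EuclideanSpace ℝ (Fin n)) (r : ℝ), 0 < r →
          (∫ x, |f x| ^ p *
              (⨆ ρ : {ρ : ℝ // 0 < ρ},
                ⨍ y in ball x (ρ : ℝ), (ball x₀ r).indicator (fun _ => (1 : ℝ)) y) ^ σ) ≤
            c * K * r ^ θ :=
  integral_against_maximal_power_general n hn θ σ hθ hσ
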